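/- Suppose a group G acts small scale equicontinuously and neutrally on a chain connected uniform space X and the projection p: X → X/G is a generalized uniform covering map. Then the uniform convergence structure and the small scale uniform convergence structure on G coincide; specifically, for every entourage E of X there is an entourage F of X such that g·h⁻¹ ∈ G_F implies (g·x, h·x) ∈ E for all x ∈ X. -/

import Mathlib

open scoped Uniformity

/-- Symmetric relation (the removed Mathlib `SymmetricRel`, with its old definition). -/
def SymmetricRel {α : Type*} (V : Set (α × α)) : Prop :=
  Prod.swap ⁻¹' V = V

/-- An `E`-chain: consecutive members of the list are `E`-related. -/
def ChainIn {α : Type*} (E : Set (α × α)) (c : List α) : Prop :=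
  c.Chain' fun a b => (a, b) ∈ E

/-- The image `f(E)` of a relation under a map. -/
def imgRel {α β : Type*} (f : α → β) (E : Set (α × α)) : Set (β × β) :=
  Prod.map f f '' E

/-- The orbit projection `p : X → X/G`. -/
def proj (G X : Type*) [Group G] [MulAction G X] :
    X → Quotient (MulAction.orbitRel G X) :=
  Quotient.mk (MulAction.orbitRel G X)

/-- `G_F`: the subgroup of `G` generated by `S_F = {h | (x, h • x) ∈ F for some x}`. -/
def GF (G : Type*) {X : Type*} [Group G] [MulAction G X] (F : Set (X × X)) : Subgroup G :=
  Subgroup.closure {h : G | ∃ x : X, (x, h • x) ∈ F}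

/-- Chain lifting property for `f : X → Y`: for every (symmetric) entourage `E` of `X`
there is an entourage `F` such that every `f(F)`-chain starting at `f x₀` lifts to an
`E`-chain starting at `x₀`. -/
def HasChainLifting {X Y : Type*} [UniformSpace X] (f : X → Y) : Prop :=
  ∀ E ∈ 𝓤 X, SymmetricRel E → ∃ F ∈ 𝓤 X, SymmetricRel F ∧
    ∀ (x₀ : X) (d : List Y), ChainIn (imgRel f F) d → d.head? = some (f x₀) →
      ∃ c : List X, ChainIn E c ∧ c.head? = some x₀ ∧ c.map f = d

/-- Uniqueness of chain lifts: there is an entourage `F` such that two `F`-chains with the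
same origin and the same image are equal. -/
def HasUniqueChainLifts {X Y : Type*} [UniformSpace X] (f : X → Y) : Prop :=
  ∃ F ∈ 𝓤 X, SymmetricRel F ∧
    ∀ α β : List X, ChainIn F α → ChainIn F β →
      α.head? = β.head? → α.map f = β.map f → α = β

/-- Approximate uniqueness of chain lifts: for every entourage `E` there is an entourage `F`
such that two `F`-chains with the same origin and the same image are `E`-close. -/
def HasApproxUniqueChainLifts {X Y : Type*} [UniformSpace X] (f : X → Y) : Prop :=
  ∀ E ∈ 𝓤 X, SymmetricRel E → ∃ F ∈ 𝓤 X, SymmetricRel F ∧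
    ∀ α β : List X, ChainIn F α → ChainIn F β →
      α.head? = β.head? → α.map f = β.map f →
        List.Forall₂ (fun a b => (a, b) ∈ E) α β

/-- Neutral action. -/
def Neutral (G X : Type*) [Group G] [MulAction G X] [UniformSpace X] : Prop :=
  ∀ E ∈ 𝓤 X, SymmetricRel E → ∃ F ∈ 𝓤 X, SymmetricRel F ∧
    ∀ (x y : X) (h : G), (x, h • y) ∈ F → ∃ g : G, (g • x, y) ∈ E

/-- Uniformly properly discontinuous action. -/
def UnifProperlyDiscontinuous (G X : Type*) [Group G] [MulAction G X] [UniformSpace X] : Prop :=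
  ∃ E ∈ 𝓤 X, SymmetricRel E ∧ ∀ (x : X) (g : G), (x, g • x) ∈ E → g = 1

/-- Equicontinuous action. -/
def EquicontinuousAction (G X : Type*) [Group G] [MulAction G X] [UniformSpace X] : Prop :=
  ∀ E ∈ 𝓤 X, ∃ F ∈ 𝓤 X, ∀ (g : G) (x y : X), (x, y) ∈ F → (g • x, g • y) ∈ E

/-- Small scale uniformly continuous action. -/
def SSUnifCont (G X : Type*) [Group G] [MulAction G X] [UniformSpace X] : Prop :=
  ∀ E ∈ 𝓤 X, SymmetricRel E → ∃ F ∈ 𝓤 X, SymmetricRel F ∧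
    ∀ g ∈ GF G F, {q : X × X | (g • q.1, g • q.2) ∈ E} ∈ 𝓤 X

/-- Small scale uniformly equicontinuous action. -/
def SSUnifEquicont (G X : Type*) [Group G] [MulAction G X] [UniformSpace X] : Prop :=
  ∀ E ∈ 𝓤 X, SymmetricRel E → ∃ F ∈ 𝓤 X, SymmetricRel F ∧
    ∀ g ∈ GF G F, ∀ x y : X, (x, y) ∈ F → (g • x, g • y) ∈ E

/-- Small scale bounded orbits: the orbits of `G_F` are `E`-bounded. -/
def SSBoundedOrbits (G X : Type*) [Group G] [MulAction G X] [UniformSpace X] : Prop :=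
  ∀ E ∈ 𝓤 X, SymmetricRel E → ∃ F ∈ 𝓤 X, SymmetricRel F ∧
    ∀ x : X, ∀ g ∈ GF G F, ∀ g' ∈ GF G F, (g • x, g' • x) ∈ E

/-- Chain connected uniform space. -/
def ChainConnectedU (X : Type*) [UniformSpace X] : Prop :=
  ∀ E ∈ 𝓤 X, SymmetricRel E → ∀ x y : X,
    ∃ c : List X, ChainIn E c ∧ c.head? = some x ∧ c.getLast? = some y

/-!
Fix `k ∈ G_F` and a point `x`. Writing `k` as a word in the generators of `G_F` and using chain
connectedness, one finds a chain of labelled points `(gᵢ, zᵢ)` from `(1, x)` to `(k, x)` in which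
each step either moves the point by `F` or changes the label by a generator. Both `zᵢ` and
`gᵢ • zᵢ` are then small chains (the latter by small scale equicontinuity) with the same origin
and the same image in `X/G`, so approximate uniqueness of chain lifts makes their ends `x` and
`k • x` close. Hence the `G_F`-orbits are small, which is the claim.
-/

open Relation

theorem SymmetricRel.mk_mem_comm {α : Type*} {V : Set (α × α)} (hV : SymmetricRel V)
    {x y : α} : (x, y) ∈ V ↔ (y, x) ∈ V :=
  Set.ext_iff.1 hV (y, x)

theorem SymmetricRel.inter {α : Type*} {U V : Set (α × α)} (hU : SymmetricRel U)
    (hV : SymmetricRel V) : SymmetricRel (U ∩ V) := by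
  unfold SymmetricRel at *
  rw [Set.preimage_inter, hU, hV]

section Action

variable {G X : Type*} [Group G] [MulAction G X]

theorem GF_mono {F F' : Set (X × X)} (h : F ⊆ F') : GF G F ≤ GF G F' :=
  Subgroup.closure_mono fun _ ⟨x, hx⟩ => ⟨x, h hx⟩

theorem proj_smul (g : G) (x : X) : proj G X (g • x) = proj G X x :=
  Quotient.sound (MulAction.mem_orbit x g)

theorem ChainConnectedU.reflTransGen [UniformSpace X] (hcc : ChainConnectedU X)
    {F : Set (X × X)} (hF : F ∈ 𝓤 X) (hFs : SymmetricRel F) (x y : X) :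
    ReflTransGen (fun a b => (a, b) ∈ F) x y := by
  obtain ⟨c, hc, hhead, hlast⟩ := hcc F hF hFs x y
  have hne : c ≠ [] := by rintro rfl; simp at hhead
  rw [List.head?_eq_some_head hne, Option.some_inj] at hhead
  rw [List.getLast?_eq_some_getLast hne, Option.some_inj] at hlast
  exact hhead ▸ hlast ▸ List.relationReflTransGen_of_exists_isChain c hc hne

end Action

theorem mem_of_reflTransGen_of_chainLifts {ι X Y : Type*} {f : X → Y} {F E : Set (X × X)}
    (huniq : ∀ α β : List X, ChainIn F α → ChainIn F β → α.head? = β.head? →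
      α.map f = β.map f → List.Forall₂ (fun a b => (a, b) ∈ E) α β)
    {r : ι → ι → Prop} {u v : ι → X} (hu : ∀ i j, r i j → (u i, u j) ∈ F)
    (hv : ∀ i j, r i j → (v i, v j) ∈ F) (huv : ∀ i, f (u i) = f (v i))
    {a b : ι} (hab : ReflTransGen r a b) (ha : u a = v a) : (u b, v b) ∈ E := by
  obtain ⟨l, hl, rfl⟩ := List.exists_isChain_cons_of_relationReflTransGen hab
  have hclose := huniq ((a :: l).map u) ((a :: l).map v) ((List.isChain_map u).2 (hl.imp hu))
    ((List.isChain_map v).2 (hl.imp hv))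
    (by simp [ha]) (by simp only [List.map_map]; exact List.map_congr_left fun i _ => huv i)
  rw [List.forall₂_map_left_iff, List.forall₂_map_right_iff, List.forall₂_same] at hclose
  exact hclose _ (List.getLast_mem _)

inductive LabelledStep (G : Type*) {X : Type*} [Group G] [MulAction G X] (F : Set (X × X)) :
    GF G F × X → GF G F × X → Prop
  | move {g : GF G F} {x y : X} : (x, y) ∈ F → LabelledStep G F (g, x) (g, y)
  | relabel {g h : GF G F} {x : X} : (x, h • x) ∈ F ∨ (x, h⁻¹ • x) ∈ F →
      LabelledStep G F (g, x) (g * h, x)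

namespace LabelledStep

variable {G X : Type*} [Group G] [MulAction G X] {F : Set (X × X)}

theorem mul_left (a : GF G F) {p q : GF G F × X} (hpq : LabelledStep G F p q) :
    LabelledStep G F (a * p.1, p.2) (a * q.1, q.2) := by
  cases hpq with
  | move hxy => exact move hxy
  | relabel hh => rw [← mul_assoc]; exact relabel hh

theorem snd_mem [UniformSpace X] {F₀ : Set (X × X)} (hF : F ⊆ F₀) (hF₀ : F₀ ∈ 𝓤 X)
    {p q : GF G F × X} (hpq : LabelledStep G F p q) : (p.2, q.2) ∈ F₀ := by
  cases hpq with
  | move hxy => exact hF hxy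
  | relabel _ => exact refl_mem_uniformity hF₀

theorem smul_mem {F₀ : Set (X × X)} (hF₀ : SymmetricRel F₀)
    (hequi : ∀ g ∈ GF G F, ∀ x y : X, (x, y) ∈ F → (g • x, g • y) ∈ F₀)
    {p q : GF G F × X} (hpq : LabelledStep G F p q) :
    ((p.1 : G) • p.2, (q.1 : G) • q.2) ∈ F₀ := by
  cases hpq with
  | @move g _ _ hxy => exact hequi g g.2 _ _ hxy
  | @relabel g h x hh =>
    rcases hh with hh | hh
    · rw [Subgroup.coe_mul, mul_smul]
      exact hequi g g.2 _ _ hh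
    · have hgh := hequi (g * h) (g * h).2 _ _ hh
      rw [Subgroup.smul_def, smul_smul, Subgroup.coe_inv, mul_inv_cancel_right] at hgh
      exact hF₀.mk_mem_comm.1 hgh

end LabelledStep

section LabelledChains

variable {G X : Type*} [Group G] [MulAction G X] [UniformSpace X] {F : Set (X × X)}

theorem reflTransGen_labelledStep_mul (hcc : ChainConnectedU X) (hF : F ∈ 𝓤 X)
    (hFs : SymmetricRel F) (g : GF G F) {h : GF G F} {y : X}
    (hh : (y, h • y) ∈ F ∨ (y, h⁻¹ • y) ∈ F) (x : X) :
    ReflTransGen (LabelledStep G F) (g, x) (g * h, x) := by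
  have hmove (k : GF G F) (a b : X) : ReflTransGen (LabelledStep G F) (k, a) (k, b) :=
    (hcc.reflTransGen hF hFs a b).lift (fun z => (k, z)) fun _ _ => LabelledStep.move
  exact ((hmove g x y).tail (LabelledStep.relabel hh)).trans (hmove _ y x)

theorem reflTransGen_labelledStep (hcc : ChainConnectedU X) (hF : F ∈ 𝓤 X)
    (hFs : SymmetricRel F) (k : GF G F) (x : X) :
    ReflTransGen (LabelledStep G F) (1, x) (k, x) := by
  have hextend (a k : GF G F) {z : X} (hz : (z, a • z) ∈ F ∨ (z, a⁻¹ • z) ∈ F)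
      (hk : ∀ x, ReflTransGen (LabelledStep G F) (1, x) (k, x)) (x : X) :
      ReflTransGen (LabelledStep G F) (1, x) (a * k, x) := by
    have hgen := reflTransGen_labelledStep_mul hcc hF hFs 1 hz x
    have hrest : ReflTransGen (LabelledStep G F) (a * 1, x) (a * k, x) :=
      (hk x).lift (fun q => (a * q.1, q.2)) fun _ _ => LabelledStep.mul_left a
    rw [one_mul] at hgen
    rw [mul_one] at hrest
    exact hgen.trans hrest
  obtain ⟨k, hk⟩ := k
  induction hk using Subgroup.closure_induction_left generalizing x with
  | one => exact .refl
  | mul_left a ha k hk ih =>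
    obtain ⟨z, hz⟩ := ha
    exact hextend ⟨a, Subgroup.subset_closure ⟨z, hz⟩⟩ _ (Or.inl hz) ih x
  | inv_mul_cancel a ha k hk ih =>
    obtain ⟨z, hz⟩ := ha
    exact hextend ⟨a, Subgroup.subset_closure ⟨z, hz⟩⟩⁻¹ _ (.inr (by rwa [inv_inv])) ih x

end LabelledChains

theorem ssBoundedOrbits_of_hasApproxUniqueChainLifts {G X : Type*} [Group G] [MulAction G X]
    [UniformSpace X] (hss : SSUnifEquicont G X) (hcc : ChainConnectedU X)
    (happrox : HasApproxUniqueChainLifts (proj G X)) : SSBoundedOrbits G X := by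
  intro E hE hEs
  obtain ⟨F₀, hF₀, hF₀s, huniq⟩ := happrox E hE hEs
  obtain ⟨F₁, hF₁, hF₁s, hequi⟩ := hss F₀ hF₀ hF₀s
  have hF : F₁ ∩ F₀ ∈ 𝓤 X := Filter.inter_mem hF₁ hF₀
  have hFs : SymmetricRel (F₁ ∩ F₀) := hF₁s.inter hF₀s
  refine ⟨F₁ ∩ F₀, hF, hFs, fun x g hg g' hg' => ?_⟩
  have hpath :=
    reflTransGen_labelledStep hcc hF hFs ⟨g' * g⁻¹, mul_mem hg' (inv_mem hg)⟩ (g • x)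
  have hclose : (g • x, (g' * g⁻¹) • g • x) ∈ E :=
    mem_of_reflTransGen_of_chainLifts (r := LabelledStep G (F₁ ∩ F₀)) (u := Prod.snd)
      (v := fun q => (q.1 : G) • q.2) huniq
      (fun _ _ => LabelledStep.snd_mem Set.inter_subset_right hF₀)
      (fun _ _ => LabelledStep.smul_mem hF₀s fun k hk _ _ hxy =>
        hequi k (GF_mono Set.inter_subset_left hk) _ _ hxy.1)
      (fun q => (proj_smul (q.1 : G) q.2).symm) hpath (one_smul G (g • x)).symm
  rwa [smul_smul, inv_mul_cancel_right] at hclose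

theorem stmt14_general (G X : Type*) [Group G] [MulAction G X] [UniformSpace X]
    (hss : SSUnifEquicont G X) (hcc : ChainConnectedU X)
    (happrox : HasApproxUniqueChainLifts (proj G X)) :
    ∀ E ∈ 𝓤 X, SymmetricRel E → ∃ F ∈ 𝓤 X, SymmetricRel F ∧
      ∀ g h : G, g * h⁻¹ ∈ GF G F → ∀ x : X, (g • x, h • x) ∈ E := by
  intro E hE hEs
  obtain ⟨F, hF, hFs, hbounded⟩ :=
    ssBoundedOrbits_of_hasApproxUniqueChainLifts hss hcc happrox E hE hEs
  refine ⟨F, hF, hFs, fun g h hgh x => ?_⟩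
  simpa [smul_smul] using hbounded (h • x) _ hgh 1 (one_mem _)

/-- If a small scale uniformly equicontinuous, neutral action on a chain connected space
induces a generalized uniform covering projection (in particular `p` has chain lifting and
approximate uniqueness of chain lifts), then the uniform convergence structure and the
small scale uniform convergence structure on `G` coincide: for every entourage `E` there
is an entourage `F` with `g·h⁻¹ ∈ G_F → (g•x, h•x) ∈ E` for all `x`. -/
theorem stmt14 (G X : Type*) [Group G] [MulAction G X] [UniformSpace X]
    (hss : SSUnifEquicont G X) (hneutral : Neutral G X) (hcc : ChainConnectedU X)
    (hcl : HasChainLifting (proj G X))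
    (happrox : HasApproxUniqueChainLifts (proj G X)) :
    ∀ E ∈ 𝓤 X, SymmetricRel E → ∃ F ∈ 𝓤 X, SymmetricRel F ∧
      ∀ g h : G, g * h⁻¹ ∈ GF G F → ∀ x : X, (g • x, h • x) ∈ E :=
  stmt14_general G X hss hcc happrox
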